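/- arXiv:1912.03749 — 5 statements merged into one kernel-verified Lean document; each statement's English description precedes it below -/
import Mathlib

section
/- Let R be an integral domain with quotient field K. Then there exists a monomorphism g : Q₀ → P₀ of R-modules with P₀ projective such that an R-module M satisfies Ext¹_R(K, M) = 0 (i.e., M is Matlis cotorsion) if and only if every homomorphism Q₀ → M factors through g. -/
universe u

/-- `Ext¹_R(A, B) = 0`: every short exact sequence `0 → B → E → A → 0` splits. -/
def Ext1Zero (R : Type u) [Ring R] (A B : Type u)
    [AddCommGroup A] [Module R A] [AddCommGroup B] [Module R B] : Prop :=
  ∀ (E : Type u) [AddCommGroup E] [Module R E] (ι : B →ₗ[R] E) (π : E →ₗ[R] A),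
    Function.Injective ι → Function.Surjective π →
      LinearMap.range ι = LinearMap.ker π →
        ∃ s : A →ₗ[R] E, π ∘ₗ s = LinearMap.id

theorem aux_forward {R K P M : Type u} [CommRing R]
    [AddCommGroup K] [Module R K] [AddCommGroup P] [Module R P]
    [AddCommGroup M] [Module R M]
    (π : P →ₗ[R] K) (hπ : Function.Surjective π)
    (hExt : Ext1Zero R K M) (h : ↥(LinearMap.ker π) →ₗ[R] M) :
    ∃ k : P →ₗ[R] M, k ∘ₗ (LinearMap.ker π).subtype = h := by
  classical
  let f : ↥(LinearMap.ker π) →ₗ[R] M × P := h.prod (-((LinearMap.ker π).subtype))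
  set N := LinearMap.range f with hN
  let E := (M × P) ⧸ N
  let ι : M →ₗ[R] E := N.mkQ ∘ₗ LinearMap.inl R M P
  have hker : N ≤ LinearMap.ker (π ∘ₗ LinearMap.snd R M P) := by
    rintro x ⟨q, rfl⟩
    have : π (q : P) = 0 := q.2
    simp [f, this]
  let π' : E →ₗ[R] K := N.liftQ (π ∘ₗ LinearMap.snd R M P) hker
  have π'_mk : ∀ (m : M) (p : P), π' (N.mkQ (m, p)) = π p := by
    intro m p; rfl
  have hι : Function.Injective ι := by
    rw [injective_iff_map_eq_zero]
    intro m hm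
    have : ((m, 0) : M × P) ∈ N := (Submodule.Quotient.mk_eq_zero N).mp hm
    obtain ⟨q, hq⟩ := this
    have h2 : -(q : P) = 0 := congrArg Prod.snd hq
    have hq0 : q = 0 := by
      ext; simpa using h2
    have h1 : h q = m := congrArg Prod.fst hq
    rw [hq0] at h1; simpa using h1.symm
  have hπ' : Function.Surjective π' := by
    intro a
    obtain ⟨p, hp⟩ := hπ a
    exact ⟨N.mkQ (0, p), by rw [π'_mk]; exact hp⟩
  have hrange : LinearMap.range ι = LinearMap.ker π' := by
    ext e
    obtain ⟨⟨m, p⟩, rfl⟩ := N.mkQ_surjective e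
    constructor
    · rintro ⟨m', he⟩
      have : ((m', 0) : M × P) - (m, p) ∈ N := (Submodule.Quotient.eq N).mp he
      obtain ⟨q, hq⟩ := this
      have h2 : -(q : P) = -p := by
        have := congrArg Prod.snd hq; simpa [f] using this
      have hp0 : π p = 0 := by
        have : (q : P) = p := by
          have := neg_injective h2; exact this
        rw [← this]; exact q.2
      show π' (N.mkQ (m, p)) = 0
      rw [π'_mk]; exact hp0
    · intro hp
      have hp0 : π p = 0 := by
        have := hp; rwa [LinearMap.mem_ker, π'_mk] at this
      refine ⟨m + h ⟨p, hp0⟩, ?_⟩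
      show N.mkQ (m + h ⟨p, hp0⟩, 0) = N.mkQ (m, p)
      simp only [Submodule.mkQ_apply]
      rw [Submodule.Quotient.eq]
      exact ⟨⟨p, hp0⟩, by simp [f]⟩
  obtain ⟨s, hs⟩ := hExt E ι π' hι hπ' hrange
  let d : E →ₗ[R] E := LinearMap.id - s ∘ₗ π'
  have hd : ∀ e, d e ∈ LinearMap.range ι := by
    intro e
    rw [hrange, LinearMap.mem_ker]
    have : π' (s (π' e)) = π' e := by
      have := congrArg (fun t => t (π' e)) hs
      simpa using this
    simp [d, this]
  let eqv := LinearEquiv.ofInjective ι hι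
  let r : E →ₗ[R] M := eqv.symm.toLinearMap ∘ₗ d.codRestrict (LinearMap.range ι) hd
  have hr : ∀ m : M, r (ι m) = m := by
    intro m
    have hπι : π' (ι m) = 0 := by
      show π' (N.mkQ (m, 0)) = 0
      rw [π'_mk]; simp
    have hdι : d (ι m) = ι m := by
      simp [d, hπι]
    show eqv.symm ⟨d (ι m), hd (ι m)⟩ = m
    rw [LinearEquiv.symm_apply_eq]
    apply Subtype.ext
    rw [LinearEquiv.ofInjective_apply]
    exact hdι
  refine ⟨r ∘ₗ (N.mkQ ∘ₗ LinearMap.inr R M P), ?_⟩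
  apply LinearMap.ext
  intro q
  have hmk : N.mkQ (0, (q : P)) = ι (h q) := by
    show _ = N.mkQ (h q, 0)
    simp only [Submodule.mkQ_apply]
    rw [Submodule.Quotient.eq]
    exact ⟨-q, by simp [f]⟩
  show r (N.mkQ (0, (q : P))) = h q
  rw [hmk, hr]

theorem aux_backward {R K P M : Type u} [CommRing R]
    [AddCommGroup K] [Module R K] [AddCommGroup P] [Module R P]
    [AddCommGroup M] [Module R M] [Module.Projective R P]
    (π : P →ₗ[R] K) (hπ : Function.Surjective π)
    (hfac : ∀ h : ↥(LinearMap.ker π) →ₗ[R] M,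
      ∃ k : P →ₗ[R] M, k ∘ₗ (LinearMap.ker π).subtype = h) :
    Ext1Zero R K M := by
  intro E _ _ ιE πE hι hsurj hrange
  obtain ⟨φ, hφ⟩ := Module.projective_lifting_property πE π hsurj
  have hφ' : ∀ p : P, πE (φ p) = π p := fun p => congrArg (fun t => t p) hφ
  have hmem : ∀ q : ↥(LinearMap.ker π), φ (q : P) ∈ LinearMap.range ιE := by
    intro q
    rw [hrange, LinearMap.mem_ker, hφ']
    exact q.2
  let eqv := LinearEquiv.ofInjective ιE hι
  let h : ↥(LinearMap.ker π) →ₗ[R] M :=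
    eqv.symm.toLinearMap ∘ₗ
      ((φ ∘ₗ (LinearMap.ker π).subtype).codRestrict (LinearMap.range ιE)
        (fun q => hmem q))
  have hcoe : ∀ x : LinearMap.range ιE, ιE (eqv.symm x) = (x : E) := by
    intro x
    have : eqv (eqv.symm x) = x := eqv.apply_symm_apply x
    have := congrArg Subtype.val this
    rwa [LinearEquiv.ofInjective_apply] at this
  have key : ∀ q : ↥(LinearMap.ker π), ιE (h q) = φ (q : P) := by
    intro q
    exact hcoe ⟨φ (q : P), hmem q⟩
  obtain ⟨k, hk⟩ := hfac h
  let ψ : P →ₗ[R] E := φ - ιE ∘ₗ k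
  have hψ : LinearMap.ker π ≤ LinearMap.ker ψ := by
    intro x hx
    have hkx : k x = h ⟨x, hx⟩ := congrArg (fun t => t ⟨x, hx⟩) hk
    have : ψ x = φ x - ιE (k x) := rfl
    rw [LinearMap.mem_ker, this, hkx, key ⟨x, hx⟩]
    simp
  let e := LinearMap.quotKerEquivOfSurjective π hπ
  let s : K →ₗ[R] E := ((LinearMap.ker π).liftQ ψ hψ) ∘ₗ e.symm.toLinearMap
  refine ⟨s, ?_⟩
  ext a
  obtain ⟨x, rfl⟩ := hπ a
  have he : e (Submodule.Quotient.mk x) = π x := by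
    simp [e, LinearMap.quotKerEquivOfSurjective]
  have he' : e.symm (π x) = Submodule.Quotient.mk x := by
    rw [LinearEquiv.symm_apply_eq]; exact he.symm
  have hsx : s (π x) = ψ x := by
    show ((LinearMap.ker π).liftQ ψ hψ) (e.symm (π x)) = ψ x
    rw [he']
    exact Submodule.liftQ_apply _ _ _
  show πE (s (π x)) = π x
  rw [hsx]
  have h0 : πE (ιE (k x)) = 0 := by
    have : ιE (k x) ∈ LinearMap.ker πE := by
      rw [← hrange]; exact ⟨k x, rfl⟩
    exact this
  have : ψ x = φ x - ιE (k x) := rfl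
  rw [this, map_sub, hφ', h0, sub_zero]

/-- Over an integral domain `R` with quotient field `K`, there is a monomorphism
`g : Q₀ → P₀` with `P₀` projective such that `M` is Matlis cotorsion
(i.e. `Ext¹_R(K, M) = 0`) iff every homomorphism `Q₀ → M` factors through `g`. -/
theorem matlis_cotorsion_factorization (R : Type u) [CommRing R] [IsDomain R] :
    ∃ (Q₀ P₀ : ModuleCat.{u} R) (g : ↥Q₀ →ₗ[R] ↥P₀),
      Function.Injective g ∧ Module.Projective R ↥P₀ ∧
        ∀ M : ModuleCat.{u} R,
          Ext1Zero R (FractionRing R) ↥M ↔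
            ∀ h : ↥Q₀ →ₗ[R] ↥M, ∃ k : ↥P₀ →ₗ[R] ↥M, k ∘ₗ g = h := by
  classical
  set K := FractionRing R
  let π : (K →₀ R) →ₗ[R] K := Finsupp.linearCombination R (_root_.id : K → K)
  have hπ : Function.Surjective π := by
    intro a
    exact ⟨Finsupp.single a 1, by simp [π]⟩
  refine ⟨ModuleCat.of R ↥(LinearMap.ker π), ModuleCat.of R (K →₀ R),
    (LinearMap.ker π).subtype, Submodule.injective_subtype _, (show Module.Projective R (K →₀ R) from inferInstance), ?_⟩
  intro M
  constructor
  · exact fun hExt h => aux_forward π hπ hExt h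
  · exact fun hfac => aux_backward π hπ hfac
end

section
/- Let R be a countable von Neumann regular ring that is not semisimple. Then every cotorsion right R-module is injective; consequently the classes of cotorsion, pure-injective, and injective right R-modules coincide. -/
/-!
Over a von Neumann regular ring, any finitely many elements `y₁, …, yₙ` admit `c₁, …, cₙ` with
`(∑ yⱼ cⱼ) yₖ = yₖ`. Applied to a relation `∑ rᵢ xᵢ = 0` this is the equational criterion of
flatness, so every module is flat and cotorsion means `Ext¹(F, M) = 0` for all `F`, i.e. injective.
Adding one column at a time, the same fact shows that every matrix `f` has a `g` with `f g f = f`;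
then `1 - f g` splits any finite presentation, so finitely presented modules are projective,
every monomorphism is pure, and pure-injective also means injective.
-/

universe u

/-- Flatness of a left module over an arbitrary ring, via the equational criterion:
whenever `∑ i, r i • x i = 0`, the tuple `x` factors through a tuple `y` by a matrix
`a` with `∑ i, r i * a i j = 0`. -/
def FlatModule (R : Type u) [Ring R] (M : Type u)
    [AddCommGroup M] [Module R M] : Prop :=
  ∀ (n : ℕ) (r : Fin n → R) (x : Fin n → M), (∑ i, r i • x i) = 0 →
    ∃ (m : ℕ) (a : Fin n → Fin m → R) (y : Fin m → M),
      (∀ i, x i = ∑ j, a i j • y j) ∧ ∀ j, (∑ i, r i * a i j) = 0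

/-- A monomorphism `ν : N → M` is pure if for every finitely presented module `C`,
the induced map `Hom(C, M) → Hom(C, M / ν(N))` is surjective. -/
def IsPureMono (R : Type u) [Ring R] {N M : Type u}
    [AddCommGroup N] [Module R N] [AddCommGroup M] [Module R M]
    (ν : N →ₗ[R] M) : Prop :=
  ∀ (C : Type u) [AddCommGroup C] [Module R C], Module.FinitePresentation R C →
    ∀ h : C →ₗ[R] M ⧸ LinearMap.range ν,
      ∃ g : C →ₗ[R] M, (LinearMap.range ν).mkQ ∘ₗ g = h

/-- `L` is pure-injective: injective with respect to all pure monomorphisms. -/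
def PureInjective (R : Type u) [Ring R] (L : Type u)
    [AddCommGroup L] [Module R L] : Prop :=
  ∀ (N M : Type u) [AddCommGroup N] [Module R N] [AddCommGroup M] [Module R M]
    (ν : N →ₗ[R] M), Function.Injective ν → IsPureMono R ν →
      ∀ f : N →ₗ[R] L, ∃ g : M →ₗ[R] L, g ∘ₗ ν = f

/-- `M` is (Enochs) cotorsion: `Ext¹_R(F, M) = 0` for every flat module `F`. -/
def Cotorsion (R : Type u) [Ring R] (M : Type u)
    [AddCommGroup M] [Module R M] : Prop :=
  ∀ F : ModuleCat.{u} R, FlatModule R ↥F → Ext1Zero R ↥F M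

def IsVonNeumannRegularRing (R : Type*) [Ring R] : Prop :=
  ∀ a : R, ∃ x : R, a * x * a = a

section Splitting

variable {R : Type u} [Ring R]

theorem ext1Zero_iff_exists_retraction {A B : Type u} [AddCommGroup A] [Module R A]
    [AddCommGroup B] [Module R B] :
    Ext1Zero R A B ↔ ∀ (E : Type u) [AddCommGroup E] [Module R E] (ι : B →ₗ[R] E)
      (π : E →ₗ[R] A), Function.Injective ι → Function.Surjective π →
        LinearMap.range ι = LinearMap.ker π → ∃ r : E →ₗ[R] B, r ∘ₗ ι = LinearMap.id := by
  refine forall₃_congr fun E _ _ => forall₅_congr fun ι π hι hπ hexact => ?_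
  exact ((LinearMap.exact_iff.mpr hexact.symm).split_tfae hι hπ).out 0 1

theorem ext1Zero_of_injective (A B : Type u) [AddCommGroup A] [Module R A]
    [AddCommGroup B] [Module R B] [Module.Injective R B] : Ext1Zero R A B := by
  refine ext1Zero_iff_exists_retraction.mpr fun E _ _ ι _ hι _ _ => ?_
  obtain ⟨r, hr⟩ := Module.Injective.out ι hι LinearMap.id
  exact ⟨r, LinearMap.ext hr⟩

theorem injective_of_forall_exists_retraction (M : ModuleCat.{u} R)
    (h : ∀ (E : Type u) [AddCommGroup E] [Module R E] (ι : M →ₗ[R] E),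
      Function.Injective ι → ∃ r : E →ₗ[R] M, r ∘ₗ ι = LinearMap.id) :
    Module.Injective R M := by
  open CategoryTheory in
  obtain ⟨r, hr⟩ := h _ (Injective.ι M).hom
    ((ModuleCat.mono_iff_injective _).mp inferInstance)
  have : Injective M :=
    Retract.injective ⟨Injective.ι M, ModuleCat.ofHom r, by ext x; exact LinearMap.congr_fun hr x⟩
  exact Module.injective_module_of_injective_object R M

end Splitting

section Regularity

variable {R : Type u} [Ring R] {A B : Type*} [AddCommGroup A] [Module R A]
  [AddCommGroup B] [Module R B]

theorem exists_coprod_comp_comp_eq (f : A →ₗ[R] B) (g : B →ₗ[R] A) (hfg : f ∘ₗ g ∘ₗ f = f)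
    (x : B) (φ : B →ₗ[R] R) (hφ : φ (x - f (g x)) • (x - f (g x)) = x - f (g x)) :
    ∃ G : B →ₗ[R] R × A, (LinearMap.toSpanSingleton R B x).coprod f ∘ₗ G ∘ₗ
      (LinearMap.toSpanSingleton R B x).coprod f = (LinearMap.toSpanSingleton R B x).coprod f := by
  have hfgf : ∀ a, f (g (f a)) = f a := LinearMap.congr_fun hfg
  set y := x - f (g x)
  set t := φ ∘ₗ (LinearMap.id - f ∘ₗ g)
  have hF : ∀ p : R × A, (LinearMap.toSpanSingleton R B x).coprod f p = p.1 • x + f p.2 := by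
    simp
  have ht : ∀ s a, t (s • x + f a) = s * φ y := fun s a => by
    have hres : s • x + f a - f (g (s • x + f a)) = s • y := by
      rw [map_add, map_add, map_smul, map_smul, hfgf, smul_sub]
      abel
    simp only [t, LinearMap.comp_apply, LinearMap.sub_apply, LinearMap.id_apply, hres,
      map_smul, smul_eq_mul]
  refine ⟨t.prod (g ∘ₗ (LinearMap.id - t.smulRight x)), LinearMap.ext fun ⟨s, a⟩ => ?_⟩
  have key : (s * φ y) • x - (s * φ y) • f (g x) = s • x - s • f (g x) := by
    rw [← smul_sub, ← smul_sub, mul_smul, hφ]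
  rw [LinearMap.comp_apply, LinearMap.comp_apply, hF (s, a), LinearMap.prod_apply,
    Function.prod_apply, hF, ht, LinearMap.comp_apply, LinearMap.sub_apply, LinearMap.id_apply,
    LinearMap.smulRight_apply, ht]
  simp only [map_sub, map_add, map_smul, hfgf]
  calc _ = ((s * φ y) • x - (s * φ y) • f (g x)) + s • f (g x) + f a := by abel
    _ = s • x + f a := by rw [key]; abel

theorem exists_comp_eq_id_of_exact {C : Type*} [AddCommGroup C] [Module R C] {f : A →ₗ[R] B}
    {p : B →ₗ[R] C} (hexact : Function.Exact f p) (hp : Function.Surjective p) {g : B →ₗ[R] A}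
    (hfg : f ∘ₗ g ∘ₗ f = f) : ∃ s : C →ₗ[R] B, p ∘ₗ s = LinearMap.id := by
  have hker : LinearMap.range f ≤ LinearMap.ker (LinearMap.id - f ∘ₗ g) := by
    rintro _ ⟨a, rfl⟩
    simpa [sub_eq_zero] using (LinearMap.congr_fun hfg a).symm
  refine ⟨(LinearMap.range f).liftQ _ hker ∘ₗ (hexact.linearEquivOfSurjective hp).symm.toLinearMap,
    LinearMap.ext fun z => ?_⟩
  obtain ⟨v, rfl⟩ := hp z
  simp [hexact.apply_apply_eq_zero]

end Regularity

namespace IsVonNeumannRegularRing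

variable {R : Type u} [Ring R]

theorem exists_sum_mul_mul_eq_self (hR : IsVonNeumannRegularRing R) {n : ℕ} (y : Fin n → R) :
    ∃ c : Fin n → R, ∀ k, (∑ j, y j * c j) * y k = y k := by
  induction n with
  | zero => exact ⟨0, fun k => k.elim0⟩
  | succ n ih =>
    obtain ⟨c, hc⟩ := ih (fun k => y k.castSucc)
    set e := ∑ j, y j.castSucc * c j
    set L := y (Fin.last n)
    obtain ⟨v, hv⟩ := hR (L - e * L)
    -- `e + (L - e L) z` fixes `L` by regularity of `L - e L`, and fixes the other `y k`
    -- because `z` kills them.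
    set z := v * (1 - e)
    have hze : ∀ k : Fin n, z * y k.castSucc = 0 := fun k => by
      rw [mul_assoc, sub_mul, one_mul, hc k, sub_self, mul_zero]
    refine ⟨Fin.snoc (fun j => c j - c j * (L * z)) z, ?_⟩
    have hsum : ∑ j, y j * Fin.snoc (α := fun _ => R) (fun j => c j - c j * (L * z)) z j
        = e + (L - e * L) * z := by
      simp only [Fin.sum_univ_castSucc, Fin.snoc_castSucc, Fin.snoc_last, mul_sub,
        Finset.sum_sub_distrib, ← mul_assoc, ← Finset.sum_mul]
      noncomm_ring
    intro k
    rw [hsum]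
    induction k using Fin.lastCases with
    | last =>
      calc (e + (L - e * L) * z) * L = e * L + (L - e * L) * v * (L - e * L) := by
            simp only [z]; noncomm_ring
        _ = L := by rw [hv]; noncomm_ring
    | cast k =>
      rw [add_mul, mul_assoc, hze, mul_zero, add_zero]
      exact hc k

theorem flatModule (hR : IsVonNeumannRegularRing R) (M : Type u) [AddCommGroup M] [Module R M] :
    FlatModule R M := by
  intro n r x hx
  obtain ⟨d, hd⟩ := hR.exists_sum_mul_mul_eq_self r
  refine ⟨n, fun i j => (1 : Matrix (Fin n) (Fin n) R) i j - d i * r j, x, fun i => ?_,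
    fun j => ?_⟩
  · simp [sub_smul, Finset.sum_sub_distrib, mul_smul, ← Finset.smul_sum, hx, Matrix.one_apply]
  · simp [mul_sub, Finset.sum_sub_distrib, ← mul_assoc, ← Finset.sum_mul, hd, Matrix.one_apply]

theorem exists_linearMap_smul_eq_self (hR : IsVonNeumannRegularRing R) {n : ℕ}
    (y : Fin n → R) : ∃ φ : (Fin n → R) →ₗ[R] R, φ y • y = y := by
  obtain ⟨c, hc⟩ := hR.exists_sum_mul_mul_eq_self y
  exact ⟨Fintype.linearCombination R c, funext fun k => hc k⟩

theorem exists_comp_comp_eq (hR : IsVonNeumannRegularRing R) {m n : ℕ}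
    (f : (Fin m → R) →ₗ[R] (Fin n → R)) : ∃ g, f ∘ₗ g ∘ₗ f = f := by
  induction m with
  | zero => exact ⟨0, LinearMap.ext fun u => by rw [Subsingleton.elim u 0, map_zero, map_zero]⟩
  | succ m ih =>
    let e := Fin.consLinearEquiv R fun _ : Fin (m + 1) => R
    set F := f ∘ₗ e.toLinearMap
    obtain ⟨g, hg⟩ := ih (F ∘ₗ LinearMap.inr R R _)
    obtain ⟨φ, hφ⟩ := hR.exists_linearMap_smul_eq_self (F (1, 0) - F (0, g (F (1, 0))))
    have hF : F = (LinearMap.toSpanSingleton R _ (F (1, 0))).coprod (F ∘ₗ LinearMap.inr R R _) := by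
      ext <;> simp
    obtain ⟨G, hG⟩ := exists_coprod_comp_comp_eq _ g hg (F (1, 0)) φ hφ
    rw [← hF] at hG
    refine ⟨e.toLinearMap ∘ₗ G, LinearMap.ext fun u => ?_⟩
    simpa [F] using LinearMap.congr_fun hG (e.symm u)

theorem projective_of_finitePresentation (hR : IsVonNeumannRegularRing R) (C : Type*)
    [AddCommGroup C] [Module R C] [Module.FinitePresentation R C] : Module.Projective R C := by
  obtain ⟨n, m, p, f, hp, hexact⟩ := Module.FinitePresentation.exists_fin' R C
  obtain ⟨g, hg⟩ := hR.exists_comp_comp_eq f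
  obtain ⟨s, hs⟩ := exists_comp_eq_id_of_exact hexact hp hg
  exact Module.Projective.of_split s p hs

theorem isPureMono (hR : IsVonNeumannRegularRing R) {N M : Type u} [AddCommGroup N] [Module R N]
    [AddCommGroup M] [Module R M] (ν : N →ₗ[R] M) : IsPureMono R ν := by
  intro C _ _ _ h
  have := hR.projective_of_finitePresentation C
  exact Module.projective_lifting_property _ h (Submodule.mkQ_surjective _)

theorem injective_of_cotorsion (hR : IsVonNeumannRegularRing R) (M : ModuleCat.{u} R)
    (hM : Cotorsion R M) : Module.Injective R M :=
  injective_of_forall_exists_retraction M fun E _ _ ι hι =>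
    ext1Zero_iff_exists_retraction.mp (hM (.of R (E ⧸ LinearMap.range ι)) (hR.flatModule _)) E ι
      (LinearMap.range ι).mkQ hι (Submodule.mkQ_surjective _) (Submodule.ker_mkQ _).symm

theorem cotorsion_iff_injective (hR : IsVonNeumannRegularRing R) (M : ModuleCat.{u} R) :
    Cotorsion R M ↔ Module.Injective R M :=
  ⟨hR.injective_of_cotorsion M, fun _ F _ => ext1Zero_of_injective F M⟩

theorem pureInjective_iff_injective (hR : IsVonNeumannRegularRing R) (L : Type u)
    [AddCommGroup L] [Module R L] : PureInjective R L ↔ Module.Injective R L :=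
  ⟨fun h => ⟨fun _ _ _ _ _ _ ν hν f =>
      (h _ _ ν hν (hR.isPureMono ν) f).imp fun _ hg => LinearMap.congr_fun hg⟩,
    fun h _ _ _ _ _ _ ν hν _ f => (h.out ν hν f).imp fun _ hg => LinearMap.ext hg⟩

end IsVonNeumannRegularRing

theorem vnr_cotorsion_eq_injective_general (R : Type u) [Ring R]
    (hvnr : ∀ a : R, ∃ x : R, a * x * a = a) :
    (∀ M : ModuleCat.{u} R, Cotorsion R ↥M → Module.Injective R ↥M) ∧
    (∀ M : ModuleCat.{u} R, Cotorsion R ↥M ↔ Module.Injective R ↥M) ∧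
    (∀ M : ModuleCat.{u} R, PureInjective R ↥M ↔ Module.Injective R ↥M) :=
  ⟨fun M => (IsVonNeumannRegularRing.cotorsion_iff_injective hvnr M).mp,
    IsVonNeumannRegularRing.cotorsion_iff_injective hvnr,
    fun M => IsVonNeumannRegularRing.pureInjective_iff_injective hvnr M⟩

/-- Over a countable von Neumann regular ring which is not semisimple, every cotorsion
module is injective; consequently the classes of cotorsion, pure-injective and
injective modules coincide. -/
theorem vnr_cotorsion_eq_injective (R : Type u) [Ring R] [Countable R]
    (hvnr : ∀ a : R, ∃ x : R, a * x * a = a)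
    (hnss : ¬ ∀ M : ModuleCat.{u} R, Module.Projective R ↥M) :
    (∀ M : ModuleCat.{u} R, Cotorsion R ↥M → Module.Injective R ↥M) ∧
    (∀ M : ModuleCat.{u} R, Cotorsion R ↥M ↔ Module.Injective R ↥M) ∧
    (∀ M : ModuleCat.{u} R, PureInjective R ↥M ↔ Module.Injective R ↥M) :=
  vnr_cotorsion_eq_injective_general R hvnr
end

section
/- Let R be an integral domain. Then there exists an epimorphism h : I → J of R-modules with I injective such that an R-module M is torsion-free if and only if every homomorphism M → J factors through h. -/
/-!
Let `N = ∏ᵣ Hom_ℤ(R/(r), ℚ/ℤ)`, embed it in an injective module `I` and let `h : I → I/N`.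
As `I` is injective, `Hom(M, h)` is onto iff `Ext¹(M, N) = 0`; for a free presentation
`0 → K → F → M → 0` this means that every map `K → N` extends to `F`. By the tensor–hom
adjunction for character modules this is injectivity of `K ⊗ R/(r) → F ⊗ R/(r)` for every `r`,
i.e. `rF ∩ K = rK`, which, `F` being torsion-free, says exactly that `M` has no `r`-torsion.
-/

universe u

open Function Pointwise

namespace Function.Exact

theorem exists_comp_eq_of_comp_eq_zero_of_surjective {R K F M T : Type*} [Ring R]
    [AddCommGroup K] [Module R K] [AddCommGroup F] [Module R F] [AddCommGroup M] [Module R M]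
    [AddCommGroup T] [Module R T] {i : K →ₗ[R] F} {π : F →ₗ[R] M} (h : Exact i π)
    (hπ : Surjective π) {g : F →ₗ[R] T} (hg : g ∘ₗ i = 0) : ∃ f : M →ₗ[R] T, f ∘ₗ π = g :=
  ⟨(LinearMap.range i).liftQ g (LinearMap.range_le_ker_iff.mpr hg) ∘ₗ
    (h.linearEquivOfSurjective hπ).symm.toLinearMap, LinearMap.ext fun x => by simp⟩

theorem exists_comp_eq_of_comp_eq_zero_of_injective {R K F M T : Type*} [CommSemiring R]
    [AddCommMonoid K] [Module R K] [AddCommMonoid F] [Module R F] [AddCommMonoid M] [Module R M]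
    [AddCommMonoid T] [Module R T] {i : K →ₗ[R] F} {π : F →ₗ[R] M} (h : Exact i π)
    (hi : Injective i) {g : T →ₗ[R] F} (hg : π ∘ₗ g = 0) : ∃ ψ : T →ₗ[R] K, i ∘ₗ ψ = g :=
  ⟨LinearMap.codRestrictOfInjective g i hi fun x => (h _).mp (LinearMap.congr_fun hg x),
    LinearMap.codRestrictOfInjective_comp ..⟩

end Function.Exact

section DimensionShift

variable {R : Type*} [CommRing R] {K F I : Type u} {M N J : Type*}
  [AddCommGroup K] [Module R K] [AddCommGroup F] [Module R F] [AddCommGroup M] [Module R M]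
  [AddCommGroup N] [Module R N] [AddCommGroup I] [Module R I] [AddCommGroup J] [Module R J]
  {i : K →ₗ[R] F} {π : F →ₗ[R] M} {e : N →ₗ[R] I} {p : I →ₗ[R] J}

theorem exists_extension_of_forall_exists_lift [Module.Injective R I] (hi : Injective i)
    (hiπ : Exact i π) (hπ : Surjective π) (he : Injective e) (hep : Exact e p)
    (hlift : ∀ f : M →ₗ[R] J, ∃ k : M →ₗ[R] I, p ∘ₗ k = f) (φ : K →ₗ[R] N) :
    ∃ ψ : F →ₗ[R] N, ψ ∘ₗ i = φ := by
  obtain ⟨χ, hχ⟩ := Module.Injective.out i hi (e ∘ₗ φ)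
  replace hχ : χ ∘ₗ i = e ∘ₗ φ := LinearMap.ext hχ
  obtain ⟨f, hf⟩ := hiπ.exists_comp_eq_of_comp_eq_zero_of_surjective hπ (g := p ∘ₗ χ) <| by
    rw [LinearMap.comp_assoc, hχ, ← LinearMap.comp_assoc, hep.linearMap_comp_eq_zero,
      LinearMap.zero_comp]
  obtain ⟨k, hk⟩ := hlift f
  obtain ⟨ψ, hψ⟩ := hep.exists_comp_eq_of_comp_eq_zero_of_injective he (g := χ - k ∘ₗ π) <| by
    rw [LinearMap.comp_sub, ← hf, ← LinearMap.comp_assoc, hk, sub_self]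
  have : e ∘ₗ ψ ∘ₗ i = e ∘ₗ φ := by
    rw [← LinearMap.comp_assoc, hψ, LinearMap.sub_comp, hχ, LinearMap.comp_assoc,
      hiπ.linearMap_comp_eq_zero, LinearMap.comp_zero, sub_zero]
  exact ⟨ψ, LinearMap.ext fun x => he (LinearMap.congr_fun this x)⟩

theorem exists_lift_of_forall_exists_extension [Module.Projective R F] (hiπ : Exact i π)
    (hπ : Surjective π) (he : Injective e) (hep : Exact e p) (hp : Surjective p)
    (hext : ∀ φ : K →ₗ[R] N, ∃ ψ : F →ₗ[R] N, ψ ∘ₗ i = φ) (f : M →ₗ[R] J) :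
    ∃ k : M →ₗ[R] I, p ∘ₗ k = f := by
  obtain ⟨g, hg⟩ := Module.projective_lifting_property p (f ∘ₗ π) hp
  obtain ⟨φ, hφ⟩ := hep.exists_comp_eq_of_comp_eq_zero_of_injective he (g := g ∘ₗ i) <| by
    rw [← LinearMap.comp_assoc, hg, LinearMap.comp_assoc, hiπ.linearMap_comp_eq_zero,
      LinearMap.comp_zero]
  obtain ⟨ψ, hψ⟩ := hext φ
  obtain ⟨k, hk⟩ := hiπ.exists_comp_eq_of_comp_eq_zero_of_surjective hπ (g := g - e ∘ₗ ψ) <| by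
    rw [LinearMap.sub_comp, LinearMap.comp_assoc, hψ, hφ, sub_self]
  refine ⟨k, (LinearMap.cancel_right hπ).mp ?_⟩
  rw [LinearMap.comp_assoc, hk, LinearMap.comp_sub, hg, ← LinearMap.comp_assoc,
    hep.linearMap_comp_eq_zero, LinearMap.zero_comp, sub_zero]

theorem forall_exists_lift_iff_forall_exists_extension [Module.Projective R F]
    [Module.Injective R I] (hi : Injective i) (hiπ : Exact i π) (hπ : Surjective π)
    (he : Injective e) (hep : Exact e p) (hp : Surjective p) :
    (∀ f : M →ₗ[R] J, ∃ k : M →ₗ[R] I, p ∘ₗ k = f) ↔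
      ∀ φ : K →ₗ[R] N, ∃ ψ : F →ₗ[R] N, ψ ∘ₗ i = φ :=
  ⟨exists_extension_of_forall_exists_lift hi hiπ hπ he hep,
    exists_lift_of_forall_exists_extension hiπ hπ he hep hp⟩

end DimensionShift

section Torsion

variable {R F M : Type*} [CommRing R] [AddCommGroup F] [Module R F] [AddCommGroup M] [Module R M]

theorem injective_quotSMulTop_map_subtype_iff (K : Submodule R F) (r : R) :
    Injective (QuotSMulTop.map r K.subtype) ↔ r • ⊤ ⊓ K ≤ r • K := by
  have hle : r • ⊤ ≤ (r • ⊤ : Submodule R F).comap K.subtype :=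
    Submodule.map_le_iff_le_comap.mp <| by
      rw [Submodule.map_pointwise_smul]; exact smul_mono_right r le_top
  change Injective (Submodule.mapQ (r • ⊤) (r • ⊤) K.subtype hle) ↔ _
  rw [← LinearMap.ker_eq_bot, Submodule.ker_mapQ, ← le_bot_iff, Submodule.map_le_iff_le_comap,
    Submodule.comap_bot, Submodule.ker_mkQ,
    ← Submodule.map_le_map_iff_of_injective K.injective_subtype, Submodule.map_comap_subtype,
    Submodule.map_pointwise_smul, Submodule.map_subtype_top, inf_comm]

theorem injective_rTensor_subtype_iff (K : Submodule R F) (r : R) :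
    Injective (K.subtype.rTensor (R ⧸ Ideal.span {r})) ↔ r • ⊤ ⊓ K ≤ r • K := by
  have h := congrArg DFunLike.coe (QuotSMulTop.equivTensorQuot_naturality r K.subtype)
  simp only [LinearMap.coe_comp, LinearEquiv.coe_coe] at h
  rw [← injective_quotSMulTop_map_subtype_iff,
    ← EquivLike.injective_comp (QuotSMulTop.equivTensorQuot r K), ← h, EquivLike.comp_injective]

theorem noZeroSMulDivisors_iff_forall_injective_rTensor_ker [IsDomain R]
    [Module.IsTorsionFree R F] {π : F →ₗ[R] M} (hπ : Surjective π) :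
    NoZeroSMulDivisors R M ↔
      ∀ r : R, Injective ((LinearMap.ker π).subtype.rTensor (R ⧸ Ideal.span {r})) := by
  simp_rw [noZeroSMulDivisors_iff_right_eq_zero_of_smul,
    ← isSMulRegular_iff_right_eq_zero_of_smul, injective_rTensor_subtype_iff]
  refine forall_congr' fun r => ?_
  rcases eq_or_ne r 0 with rfl | hr
  · simp
  · rw [← (π.quotKerEquivOfSurjective hπ).isSMulRegular_congr,
      (IsSMulRegular.of_ne_zero hr).isSMulRegular_on_quot_iff_smul_top_inf_eq_smul]
    exact imp_iff_right hr

end Torsion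

theorem forall_exists_extension_pi_iff {R K F ι : Type*} [Semiring R] [AddCommMonoid K]
    [Module R K] [AddCommMonoid F] [Module R F] {N : ι → Type*} [∀ j, AddCommMonoid (N j)]
    [∀ j, Module R (N j)]
    (i : K →ₗ[R] F) :
    (∀ φ : K →ₗ[R] (∀ j, N j), ∃ ψ : F →ₗ[R] (∀ j, N j), ψ ∘ₗ i = φ) ↔
      ∀ j, ∀ φ : K →ₗ[R] N j, ∃ ψ : F →ₗ[R] N j, ψ ∘ₗ i = φ := by
  classical
  constructor
  · intro h j φ
    obtain ⟨ψ, hψ⟩ := h (LinearMap.single R N j ∘ₗ φ)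
    refine ⟨LinearMap.proj j ∘ₗ ψ, ?_⟩
    rw [LinearMap.comp_assoc, hψ, ← LinearMap.comp_assoc, LinearMap.proj_comp_single_same,
      LinearMap.id_comp]
  · intro h φ
    choose ψ hψ using fun j => h j (LinearMap.proj j ∘ₗ φ)
    refine ⟨LinearMap.pi ψ, ?_⟩
    rw [LinearMap.pi_comp, funext hψ, ← LinearMap.pi_comp, LinearMap.pi_proj, LinearMap.id_comp]

theorem forall_injective_rTensor_iff_forall_exists_extension_pi {R K F ι : Type*} [CommRing R]
    [AddCommGroup K] [Module R K] [AddCommGroup F] [Module R F] (B : ι → Type*)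
    [∀ j, AddCommGroup (B j)] [∀ j, Module R (B j)] (i : K →ₗ[R] F) :
    (∀ j, Injective (i.rTensor (B j))) ↔
      ∀ φ : K →ₗ[R] (∀ j, CharacterModule (B j)),
        ∃ ψ : F →ₗ[R] (∀ j, CharacterModule (B j)), ψ ∘ₗ i = φ := by
  rw [forall_exists_extension_pi_iff]
  exact forall_congr' fun j => rTensor_injective_iff_lcomp_surjective

/-- Over an integral domain `R`, there is an epimorphism `h : I → J` with `I`
injective such that a module `M` is torsion-free iff every homomorphism `M → J`
factors through `h`. -/
theorem torsionFree_cofactorization (R : Type u) [CommRing R] [IsDomain R] :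
    ∃ (I J : ModuleCat.{u} R) (h : ↥I →ₗ[R] ↥J),
      Function.Surjective h ∧ Module.Injective R ↥I ∧
        ∀ M : ModuleCat.{u} R,
          NoZeroSMulDivisors R ↥M ↔
            ∀ f : ↥M →ₗ[R] ↥J, ∃ k : ↥M →ₗ[R] ↥I, h ∘ₗ k = f := by
  let N := ModuleCat.of R (∀ r : R, CharacterModule (R ⧸ Ideal.span {r}))
  let I : ModuleCat R := CategoryTheory.Injective.under N
  let e : N →ₗ[R] I := (CategoryTheory.Injective.ι N).hom
  have he : Injective e := (ModuleCat.mono_iff_injective _).mp inferInstance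
  have : CategoryTheory.Injective (ModuleCat.of R I) := CategoryTheory.Injective.injective_under N
  have hI : Module.Injective R I := Module.injective_module_of_injective_object R I
  refine ⟨I, ModuleCat.of R (I ⧸ LinearMap.range e), (LinearMap.range e).mkQ,
    Submodule.mkQ_surjective _, hI, fun M => ?_⟩
  let π := Finsupp.linearCombination R (id : M → M)
  have hπ : Surjective π := fun m => ⟨Finsupp.single m 1, by simp [π]⟩
  rw [noZeroSMulDivisors_iff_forall_injective_rTensor_ker hπ,
    forall_exists_lift_iff_forall_exists_extension (K := LinearMap.ker π)
      (LinearMap.ker π).injective_subtype (LinearMap.exact_subtype_ker_map π) hπ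
      he (LinearMap.exact_map_mkQ_range e) (Submodule.mkQ_surjective _)]
  exact forall_injective_rTensor_iff_forall_exists_extension_pi (K := LinearMap.ker π) _ _
end

section
/- Let R be a right perfect ring. Then there exists an epimorphism g : I → J of right R-modules with I injective such that a right R-module M is projective if and only if every homomorphism M → J factors through g. -/
universe u

/-! Let `K` be the product of the character modules `(R ⧸ 𝔞)⁺` over all finitely generated right
ideals `𝔞`, embedded in an injective module `I`, and let `g : I → I ⧸ K`. Projective modules lift
along `g`. Conversely, if every map `M → I ⧸ K` lifts, then for a free presentation
`0 → S → F → M → 0` every map `S → K` extends to `F`, because `I` is injective. Feeding the maps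
`S → (R ⧸ 𝔞)⁺, t ↦ (c ↦ χ (c • t))` built from characters `χ` of `S` into this shows
`S ∩ 𝔞 F = 𝔞 S`, which is the equational criterion for flatness; right perfectness then makes `M`
projective. -/

open CategoryTheory

/-- `Hom_ℤ(R, ℚ/ℤ)`, the character module of `R` as a right module over itself, made a left
`R`-module by `(c • f) t = f (t * c)`. -/
def RingChar (R : Type u) [Ring R] : Type u := R →+ AddCircle (1 : ℚ)

namespace RingChar

variable {R : Type u} [Ring R]

instance : FunLike (RingChar R) R (AddCircle (1 : ℚ)) :=
  inferInstanceAs (FunLike (R →+ _) R _)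

instance : AddMonoidHomClass (RingChar R) R (AddCircle (1 : ℚ)) :=
  inferInstanceAs (AddMonoidHomClass (R →+ _) R _)

instance : AddCommGroup (RingChar R) := inferInstanceAs (AddCommGroup (R →+ _))

instance : SMul R (RingChar R) :=
  ⟨fun c f => AddMonoidHom.comp (f : R →+ AddCircle (1 : ℚ)) (AddMonoidHom.mulRight c)⟩

@[simp] lemma smul_apply (c : R) (f : RingChar R) (t : R) : (c • f) t = f (t * c) := rfl

@[simp] lemma add_apply (f g : RingChar R) (t : R) : (f + g) t = f t + g t := rfl

lemma sum_apply {ι : Type*} (s : Finset ι) (f : ι → RingChar R) (t : R) :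
    (∑ i ∈ s, f i) t = ∑ i ∈ s, f i t :=
  AddMonoidHom.finsetSum_apply f s t

@[ext] lemma ext {f g : RingChar R} (h : ∀ t, f t = g t) : f = g := DFunLike.ext _ _ h

instance : Module R (RingChar R) where
  one_smul f := ext fun t => by rw [smul_apply, mul_one]
  mul_smul c c' f := ext fun t => by rw [smul_apply, smul_apply, smul_apply, mul_assoc]
  smul_zero c := rfl
  smul_add c f g := rfl
  add_smul c c' f := ext fun t => by
    rw [add_apply, smul_apply, smul_apply, smul_apply, mul_add, map_add]
  zero_smul f := ext fun t => by rw [smul_apply, mul_zero, map_zero]; rfl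

/-- The character module of `R ⧸ ∑ i, r i * R`. -/
def vanishing {n : ℕ} (r : Fin n → R) : Submodule R (RingChar R) where
  carrier := {f | ∀ i b, f (r i * b) = 0}
  add_mem' hf hg i b := by rw [add_apply, hf i b, hg i b, add_zero]
  zero_mem' _ _ := rfl
  smul_mem' c f hf i b := by rw [smul_apply, mul_assoc]; exact hf i (b * c)

def ofCharacter {S : Type*} [AddCommGroup S] [Module R S] (χ : S →+ AddCircle (1 : ℚ)) :
    S →ₗ[R] RingChar R where
  toFun t := (χ.comp (LinearMap.toSpanSingleton R S t).toAddMonoidHom : R →+ _)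
  map_add' t t' := ext fun c => show χ (c • (t + t')) = χ (c • t) + χ (c • t') by
    rw [smul_add, map_add]
  map_smul' c t := ext fun c' => show χ (c' • c • t) = χ ((c' * c) • t) by rw [mul_smul]

@[simp] lemma ofCharacter_apply {S : Type*} [AddCommGroup S] [Module R S]
    (χ : S →+ AddCircle (1 : ℚ)) (t : S) (c : R) : ofCharacter χ t c = χ (c • t) := rfl

end RingChar

def weightedSum {R : Type*} [Ring R] (S : Type*) [AddCommGroup S] [Module R S] {n : ℕ}
    (r : Fin n → R) : (Fin n → S) →+ S :=
  AddMonoidHom.mk' (fun w => ∑ i, r i • w i) fun w w' => by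
    simp only [Pi.add_apply, smul_add, Finset.sum_add_distrib]

@[simp] lemma weightedSum_apply {R : Type*} [Ring R] {S : Type*} [AddCommGroup S] [Module R S]
    {n : ℕ} (r : Fin n → R) (w : Fin n → S) : weightedSum S r w = ∑ i, r i • w i := rfl

lemma AddSubgroup.mem_of_forall_character {S : Type*} [AddCommGroup S] (G : AddSubgroup S)
    {s : S} (h : ∀ χ : S →+ AddCircle (1 : ℚ), (∀ z ∈ G, χ z = 0) → χ s = 0) : s ∈ G := by
  rw [← QuotientAddGroup.eq_zero_iff]
  refine CharacterModule.eq_zero_of_character_apply fun c => ?_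
  exact h ((c : S ⧸ G →+ _).comp (QuotientAddGroup.mk' G)) fun z hz =>
    (congrArg c ((QuotientAddGroup.eq_zero_iff z).mpr hz)).trans (map_zero c)

variable {R : Type u} [Ring R]

theorem exists_eq_weightedSum_of_forall_extend {F : Type*} [AddCommGroup F] [Module R F]
    (S : Submodule R F) {n : ℕ} (r : Fin n → R)
    (hext : ∀ f : S →ₗ[R] RingChar.vanishing r,
      ∃ ψ : F →ₗ[R] RingChar.vanishing r, ψ ∘ₗ S.subtype = f)
    (x : Fin n → F) (hx : ∑ i, r i • x i ∈ S) :
    ∃ w : Fin n → S, ∑ i, r i • x i = ∑ i, r i • (w i : F) := by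
  set s : S := ⟨_, hx⟩
  suffices s ∈ (weightedSum S r).range by
    obtain ⟨w, hw⟩ := this
    refine ⟨w, ?_⟩
    simpa [s] using congrArg Subtype.val hw.symm
  refine AddSubgroup.mem_of_forall_character _ fun χ hχ => ?_
  have hvan (t : S) : RingChar.ofCharacter χ t ∈ RingChar.vanishing r := fun i b => by
    rw [RingChar.ofCharacter_apply, mul_smul]
    refine hχ _ ⟨Pi.single i (b • t), ?_⟩
    simp [Pi.single_apply]
  obtain ⟨ψ, hψ⟩ := hext ((RingChar.ofCharacter χ).codRestrict _ hvan)
  have hψr (i : Fin n) : (ψ (r i • x i) : RingChar R) 1 = 0 := by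
    rw [map_smul, Submodule.coe_smul, RingChar.smul_apply, one_mul, ← mul_one (r i)]
    exact (ψ (x i)).2 i 1
  calc χ s = RingChar.ofCharacter χ s (1 : R) := by rw [RingChar.ofCharacter_apply, one_smul]
    _ = (ψ s : RingChar R) 1 :=
      congrArg (fun g : RingChar.vanishing r => (g : RingChar R) 1) (LinearMap.congr_fun hψ s).symm
    _ = 0 := by
      rw [map_sum, Submodule.coe_sum, RingChar.sum_apply]
      exact Finset.sum_eq_zero fun i _ => hψr i

theorem exists_factorization_of_relation {α M : Type*} [AddCommGroup M] [Module R M]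
    (v : α → M) {n : ℕ} (r : Fin n → R) (u : Fin n → α →₀ R) (hu : ∑ i, r i • u i = 0) :
    ∃ (m : ℕ) (a : Fin n → Fin m → R) (y : Fin m → M),
      (∀ i, Finsupp.linearCombination R v (u i) = ∑ j, a i j • y j) ∧
        ∀ j, ∑ i, r i * a i j = 0 := by
  classical
  let T : Finset α := Finset.univ.biUnion fun i => (u i).support
  let e := T.equivFin
  refine ⟨T.card, fun i j => u i (e.symm j), fun j => v (e.symm j), fun i => ?_, fun j => ?_⟩
  · have hT : (u i).support ⊆ T := Finset.subset_biUnion_of_mem (fun i => (u i).support)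
      (Finset.mem_univ i)
    rw [Finsupp.linearCombination_apply, Finsupp.sum_of_support_subset (u i) hT _ (by simp),
      ← Finset.sum_coe_sort T, ← e.symm.sum_comp]
  · simpa using congrArg (· (e.symm j : α)) hu

theorem flatModule_of_forall_extend (M : Type u) [AddCommGroup M] [Module R M]
    (hext : ∀ (n : ℕ) (r : Fin n → R)
      (f : LinearMap.ker (Finsupp.linearCombination R (id : M → M)) →ₗ[R] RingChar.vanishing r),
      ∃ ψ : (M →₀ R) →ₗ[R] RingChar.vanishing r, ψ ∘ₗ (LinearMap.ker _).subtype = f) :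
    FlatModule R M := by
  intro n r x hrx
  let e (i : Fin n) : M →₀ R := Finsupp.single (x i) 1
  have he : ∑ i, r i • e i ∈ LinearMap.ker (Finsupp.linearCombination R (id : M → M)) := by
    simpa [e, map_sum] using hrx
  obtain ⟨w, hw⟩ := exists_eq_weightedSum_of_forall_extend _ r (hext n r) e he
  obtain ⟨m, a, y, hxy, ha⟩ :=
    exists_factorization_of_relation id r (fun i => e i - (w i : M →₀ R)) <| by
      simp only [smul_sub, Finset.sum_sub_distrib, hw, sub_self]
  refine ⟨m, a, y, fun i => ?_, ha⟩
  rw [← hxy i, map_sub, LinearMap.mem_ker.mp (w i).2, sub_zero]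
  simp [e]

theorem exists_extend_of_forall_lift {K F M : Type*} {Q : Type u} [AddCommGroup K] [Module R K]
    [AddCommGroup Q] [Module R Q] [Module.Injective R Q] [AddCommGroup F] [Module R F]
    [AddCommGroup M] [Module R M] {ι : K →ₗ[R] Q} (hι : Function.Injective ι)
    {π : F →ₗ[R] M} (hπ : Function.Surjective π)
    (hlift : ∀ h : M →ₗ[R] Q ⧸ LinearMap.range ι,
      ∃ k : M →ₗ[R] Q, (LinearMap.range ι).mkQ ∘ₗ k = h)
    (f : LinearMap.ker π →ₗ[R] K) : ∃ ψ : F →ₗ[R] K, ψ ∘ₗ (LinearMap.ker π).subtype = f := by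
  obtain ⟨Φ, hΦ⟩ := Module.Injective.extension_property R Q _ _ _
    (LinearMap.ker π).injective_subtype (ι ∘ₗ f)
  have hΦf (t : LinearMap.ker π) : Φ t = ι (f t) := LinearMap.congr_fun hΦ t
  have hker : LinearMap.ker π ≤ LinearMap.ker ((LinearMap.range ι).mkQ ∘ₗ Φ) := fun t ht => by
    simp [hΦf ⟨t, ht⟩]
  let h := (LinearMap.ker π).liftQ _ hker ∘ₗ (π.quotKerEquivOfSurjective hπ).symm.toLinearMap
  have hπh (t : F) : h (π t) = (LinearMap.range ι).mkQ (Φ t) := by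
    have : (π.quotKerEquivOfSurjective hπ).symm (π t) = Submodule.Quotient.mk t := by
      rw [LinearEquiv.symm_apply_eq]; rfl
    simp [h, this]
  obtain ⟨k, hk⟩ := hlift h
  have hrange (t : F) : (Φ - k ∘ₗ π) t ∈ LinearMap.range ι := by
    rw [← Submodule.Quotient.mk_eq_zero, LinearMap.sub_apply, Submodule.Quotient.mk_sub,
      ← Submodule.mkQ_apply, ← Submodule.mkQ_apply, ← hπh, ← hk]
    exact sub_self _
  refine ⟨(LinearEquiv.ofInjective ι hι).symm ∘ₗ (Φ - k ∘ₗ π).codRestrict _ hrange, ?_⟩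
  ext t
  apply hι
  simp [hΦf, LinearMap.mem_ker.mp t.2]

theorem exists_extend_of_pi {F : Type*} [AddCommGroup F] [Module R F] (S : Submodule R F)
    {α : Type*} (K : α → Type*) [∀ a, AddCommGroup (K a)] [∀ a, Module R (K a)]
    (hext : ∀ f : S →ₗ[R] (∀ a, K a), ∃ ψ : F →ₗ[R] (∀ a, K a), ψ ∘ₗ S.subtype = f)
    (a : α) (f : S →ₗ[R] K a) : ∃ ψ : F →ₗ[R] K a, ψ ∘ₗ S.subtype = f := by
  classical
  obtain ⟨ψ, hψ⟩ := hext (LinearMap.single R K a ∘ₗ f)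
  refine ⟨LinearMap.proj a ∘ₗ ψ, ?_⟩
  rw [LinearMap.comp_assoc, hψ, ← LinearMap.comp_assoc, LinearMap.proj_comp_single_same,
    LinearMap.id_comp]

variable (R) in
abbrev FlatTestModule : Type u := ∀ σ : Σ n : ℕ, Fin n → R, RingChar.vanishing σ.2

/-- Over a right perfect ring (every flat module is projective), there is an
epimorphism `g : I → J` with `I` injective such that a module `M` is projective
iff every homomorphism `M → J` factors through `g`. -/
theorem perfect_projectivity_cofactorization (R : Type u) [Ring R]
    (hperf : ∀ M : ModuleCat.{u} R, FlatModule R ↥M → Module.Projective R ↥M) :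
    ∃ (I J : ModuleCat.{u} R) (g : ↥I →ₗ[R] ↥J),
      Function.Surjective g ∧ Module.Injective R ↥I ∧
        ∀ M : ModuleCat.{u} R,
          Module.Projective R ↥M ↔
            ∀ h : ↥M →ₗ[R] ↥J, ∃ k : ↥M →ₗ[R] ↥I, g ∘ₗ k = h := by
  let K := ModuleCat.of R (FlatTestModule R)
  let I : ModuleCat.{u} R := Injective.under K
  let ι : FlatTestModule R →ₗ[R] I := (Injective.ι K).hom
  have hι : Function.Injective ι := (ModuleCat.mono_iff_injective _).mp inferInstance
  have hI : Module.Injective R I :=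
    Module.injective_module_of_injective_object (inj := Injective.injective_under K) R I
  refine ⟨I, ModuleCat.of R (I ⧸ LinearMap.range ι), (LinearMap.range ι).mkQ,
    Submodule.mkQ_surjective _, hI, fun M => ?_⟩
  refine ⟨fun _ h => Module.projective_lifting_property _ h (Submodule.mkQ_surjective _),
    fun hlift => hperf M ?_⟩
  refine flatModule_of_forall_extend M fun n r =>
    exists_extend_of_pi _ (fun σ : Σ n, Fin n → R => RingChar.vanishing σ.2) ?_ ⟨n, r⟩
  exact exists_extend_of_forall_lift hι (Finsupp.linearCombination_id_surjective R M) hlift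
end

section
/- Let R be a Dedekind domain, p a maximal ideal of R, and M an R-module. Then Ext¹_R(E(R/p), M) = 0 whenever Ext¹_R(R/p, M) = 0, where E(R/p) is the injective hull of R/p; more precisely, the class {M : Ext¹_R(R/p, M) = 0} equals {M : Mp = M}. -/
/-!
Splitting the pushout of `0 → p → R → R/p → 0` along a map `p → M` shows that `Ext¹(R/p, M) = 0`
makes every map `p → M` extend to `R`. Since `p` is invertible, the values `φ a` of maps
`φ : p → R` at `a ∈ p` generate `R`, and this turns the extension property for `p` into `pM = M`
and back.

Conversely, if `pM = M` and `E` is `p`-power torsion, `0 → M → X → E → 0` splits by Baer's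
argument: take `Y ⊆ X` maximal with `Y ∩ M = 0`; for `e ∉ π(Y)` the ideal `I = {r | r e ∈ π(Y)}`
contains some `pⁿ`, so `IM = M`, maps `I → M` extend to `R`, and `Y` can be enlarged by a lift of
`e`. An essential extension `E` of `R/p` is `p`-power torsion: if `ann(e) = pⁿJ` with `p ∤ J`, then
`pⁿRe` is killed by `J`, its intersection with `R/p` also by `p`, so it meets `R/p` trivially and
vanishes.
-/

universe u

open Submodule LinearMap Function

theorem exists_maximal_disjoint {α : Type*} [CompleteLattice α] [IsCompactlyGenerated α] (a : α) :
    ∃ b, Maximal (Disjoint · a) b :=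
  zorn_le₀ {b | Disjoint b a} fun _ hc hchain =>
    ⟨_, hchain.directedOn.disjoint_sSup_left.mpr fun _ hb => hc hb, fun _ => le_sSup⟩

section LinearAlgebra

variable {R A B C : Type*} [Ring R] [AddCommGroup A] [Module R A] [AddCommGroup B] [Module R B]
  [AddCommGroup C] [Module R C]

theorem LinearMap.exists_comp_eq_of_range_le {ι : B →ₗ[R] C} (hι : Injective ι) (g : A →ₗ[R] C)
    (h : range g ≤ range ι) : ∃ g' : A →ₗ[R] B, ι ∘ₗ g' = g :=
  ⟨(LinearEquiv.ofInjective ι hι).symm ∘ₗ g.codRestrict _ fun a => h (mem_range_self g a),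
    LinearMap.ext fun a => by simp⟩

theorem LinearMap.exists_rightInverse_of_disjoint_ker {π : B →ₗ[R] C} {Y : Submodule R B}
    (hdisj : Disjoint Y (ker π)) (htop : Y.map π = ⊤) : ∃ s : C →ₗ[R] B, π ∘ₗ s = id := by
  have hinj : Injective (π ∘ₗ Y.subtype) := by
    rw [← ker_eq_bot, ker_comp, ← disjoint_iff_comap_eq_bot]
    exact hdisj
  have hsurj : Surjective (π ∘ₗ Y.subtype) := by
    rw [← range_eq_top, range_comp, range_subtype, htop]
  let e := LinearEquiv.ofBijective _ ⟨hinj, hsurj⟩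
  exact ⟨Y.subtype ∘ₗ e.symm.toLinearMap, LinearMap.ext e.apply_symm_apply⟩

theorem LinearMap.disjoint_sup_span_singleton_ker {π : B →ₗ[R] C} {Y : Submodule R B}
    (hY : Disjoint Y (ker π)) {y : B} (hy : ∀ r : R, r • π y ∈ Y.map π → r • y ∈ Y) :
    Disjoint (Y ⊔ R ∙ y) (ker π) := by
  refine disjoint_def.mpr fun z hz hzker => ?_
  obtain ⟨w, hw, v, hv, rfl⟩ := mem_sup.mp hz
  obtain ⟨r, rfl⟩ := mem_span_singleton.mp hv
  have hr : r • y ∈ Y := hy r ⟨-w, neg_mem hw, by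
    rw [map_neg, neg_eq_iff_add_eq_zero, ← map_smul, ← map_add]
    exact hzker⟩
  exact disjoint_def.mp hY _ (add_mem hw hr) hzker

end LinearAlgebra

section Ideal

variable {R M E : Type*} [CommRing R] [AddCommGroup M] [Module R M] [AddCommGroup E] [Module R E]

def Module.BaerAt (I : Ideal R) (M : Type*) [AddCommGroup M] [Module R M] : Prop :=
  ∀ f : I →ₗ[R] M, ∃ m : M, ∀ x : I, f x = (x : R) • m

theorem Ideal.linearMap_apply_mul_comm {I : Ideal R} (φ : I →ₗ[R] R) (x y : I) :
    φ x * y = x * φ y := by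
  have hxy : (y : R) • x = (x : R) • y := Subtype.ext (mul_comm _ _)
  rw [mul_comm, ← smul_eq_mul, ← map_smul, hxy, map_smul, smul_eq_mul]

theorem exists_linearMap_smul_eq_smul_of_mem_smul_top {I : Ideal R} (φ : I →ₗ[R] R) {u : M}
    (hu : u ∈ I • (⊤ : Submodule R M)) : ∃ m : M, ∀ x : I, φ x • u = (x : R) • m := by
  refine Submodule.smul_induction_on hu (fun b hb n _ => ?_) ?_
  · refine ⟨φ ⟨b, hb⟩ • n, fun x => ?_⟩
    rw [smul_smul, smul_smul, Ideal.linearMap_apply_mul_comm φ x ⟨b, hb⟩]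
  · rintro u₁ u₂ ⟨m₁, hm₁⟩ ⟨m₂, hm₂⟩
    exact ⟨m₁ + m₂, fun x => by rw [smul_add, smul_add, hm₁, hm₂]⟩

theorem Ideal.pow_smul_top_eq_top {I : Ideal R} (h : I • (⊤ : Submodule R M) = ⊤) (n : ℕ) :
    I ^ n • (⊤ : Submodule R M) = ⊤ := by
  induction n with
  | zero => simp
  | succ n ih => rw [pow_succ, Submodule.mul_smul, h, ih]

theorem Ideal.le_torsionOf_quotient (I : Ideal R) (x : R ⧸ I) :
    I ≤ Ideal.torsionOf R (R ⧸ I) x :=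
  fun r hr => (Ideal.mem_torsionOf_iff _ _).mpr <| by
    rw [Algebra.smul_def, Ideal.Quotient.algebraMap_eq, Ideal.Quotient.eq_zero_iff_mem.mpr hr,
      zero_mul]

theorem Ideal.smul_range_eq_bot (I : Ideal R) (j : (R ⧸ I) →ₗ[R] E) : I • range j = ⊥ := by
  rw [range_eq_map, ← map_smul'', eq_bot_iff, Submodule.map_le_iff_le_comap]
  refine smul_le.mpr fun r hr x _ => ?_
  rw [Submodule.mem_comap, (Ideal.mem_torsionOf_iff _ _).mp (I.le_torsionOf_quotient x hr),
    map_zero]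
  exact zero_mem _

theorem Submodule.disjoint_of_smul_eq_bot {I J : Ideal R} (hIJ : I ⊔ J = ⊤) {P N : Submodule R E}
    (hP : I • P = ⊥) (hN : J • N = ⊥) : Disjoint P N := by
  rw [disjoint_iff, eq_bot_iff]
  calc P ⊓ N = (I ⊔ J) • (P ⊓ N) := by rw [hIJ, top_smul]
    _ = I • (P ⊓ N) ⊔ J • (P ⊓ N) := sup_smul ..
    _ ≤ I • P ⊔ J • N := sup_le_sup (smul_mono_right _ inf_le_left) (smul_mono_right _ inf_le_right)
    _ = ⊥ := by rw [hP, hN, sup_bot_eq]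

end Ideal

section Ext

variable {R : Type u} [CommRing R] {M E X : Type u} [AddCommGroup M] [Module R M]
  [AddCommGroup E] [Module R E] [AddCommGroup X] [Module R X]

/-- The pushout of `0 → I → R → R/I → 0` along `f` is `(M × R) / {(-f x, x) | x ∈ I}`. -/
theorem Module.baerAt_of_ext1Zero_quotient (I : Ideal R) (h : Ext1Zero R (R ⧸ I) M) :
    Module.BaerAt I M := by
  intro f
  set G := range ((-f).prod I.subtype)
  let ι := G.mkQ ∘ₗ inl R M R
  let π := G.liftQ (I.mkQ ∘ₗ snd R M R) (by rintro _ ⟨x, rfl⟩; simp [Ideal.Quotient.eq_zero_iff_mem])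
  have hmk (x : I) : G.mkQ (0, (x : R)) = ι (f x) :=
    (Submodule.Quotient.eq G).mpr ⟨x, by simp⟩
  have hι : Function.Injective ι := by
    refine (injective_iff_map_eq_zero _).mpr fun m hm => ?_
    obtain ⟨x, hx⟩ := (Submodule.Quotient.mk_eq_zero G).mp hm
    have hx0 : x = 0 := Subtype.ext (congrArg Prod.snd hx)
    simpa [hx0] using (congrArg Prod.fst hx).symm
  have hπ : Function.Surjective π := by
    rintro ⟨r⟩
    exact ⟨G.mkQ (0, r), rfl⟩
  have hexact : range ι = ker π := by
    refine le_antisymm (by rintro _ ⟨m, rfl⟩; simp [π, ι]) fun z hz => ?_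
    obtain ⟨⟨m, r⟩, rfl⟩ := G.mkQ_surjective z
    have hr : r ∈ I := by simpa [π, Ideal.Quotient.eq_zero_iff_mem] using hz
    refine ⟨m + f ⟨r, hr⟩, ?_⟩
    rw [map_add, ← hmk]
    simp [ι, ← Submodule.Quotient.mk_add]
  obtain ⟨s, hs⟩ := h _ ι π hι hπ hexact
  let g := G.mkQ ∘ₗ inr R M R - s ∘ₗ I.mkQ
  have hg : range g ≤ range ι := by
    rintro _ ⟨r, rfl⟩
    have hsr : π (s (I.mkQ r)) = I.mkQ r := LinearMap.congr_fun hs _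
    rw [hexact, mem_ker]
    simp only [g, LinearMap.sub_apply, LinearMap.comp_apply, map_sub, hsr]
    exact sub_self _
  obtain ⟨g', hg'⟩ := exists_comp_eq_of_range_le hι g hg
  refine ⟨g' 1, fun x => hι ?_⟩
  calc ι (f x) = g x := by simp [g, ← hmk, Ideal.Quotient.eq_zero_iff_mem.mpr x.2]
    _ = ι ((x : R) • g' 1) := by rw [← hg', LinearMap.comp_apply, ← map_smul, smul_eq_mul, mul_one]

/-- On `I = (π(Y) : π x₀)`, `r ↦ r • x₀ mod Y` is a map `I → M`; Baer's condition writes it as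
`r ↦ r • m`, and `y = x₀ - ι m` works. -/
theorem exists_lift_smul_mem
    (hE : ∀ (e : E) (I : Ideal R), Ideal.torsionOf R E e ≤ I → Module.BaerAt I M)
    {ι : M →ₗ[R] X} {π : X →ₗ[R] E} (hι : Injective ι) (hexact : range ι = ker π)
    {Y : Submodule R X} (hY : Disjoint Y (ker π)) (x₀ : X) :
    ∃ y, π y = π x₀ ∧ ∀ r : R, r • π y ∈ Y.map π → r • y ∈ Y := by
  set I := (Y.map π).colon {π x₀}
  have hI : Ideal.torsionOf R E (π x₀) ≤ I := fun r hr => by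
    rw [mem_colon_singleton, (Ideal.mem_torsionOf_iff _ _).mp hr]
    exact zero_mem _
  have hιY : Injective (Y.mkQ ∘ₗ ι) := by
    refine (injective_iff_map_eq_zero _).mpr fun m hm => hι ?_
    rw [map_zero]
    refine disjoint_def.mp hY _ ((Quotient.mk_eq_zero Y).mp hm) ?_
    rw [← hexact]
    exact mem_range_self ι m
  let g : I →ₗ[R] X ⧸ Y := toSpanSingleton R _ (Y.mkQ x₀) ∘ₗ I.subtype
  have hg : range g ≤ range (Y.mkQ ∘ₗ ι) := by
    rintro _ ⟨⟨r, hr⟩, rfl⟩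
    obtain ⟨y, hy, hyx⟩ := mem_colon_singleton.mp hr
    obtain ⟨m, hm⟩ : r • x₀ - y ∈ range ι := by
      rw [hexact, mem_ker, map_sub, map_smul, hyx, sub_self]
    refine ⟨m, ?_⟩
    simp [g, hm, (Quotient.mk_eq_zero Y).mpr hy]
  obtain ⟨f, hf⟩ := exists_comp_eq_of_range_le hιY g hg
  obtain ⟨m, hm⟩ := hE _ I hI f
  have hπι : π (ι m) = 0 := by
    rw [← mem_ker, ← hexact]
    exact mem_range_self ι m
  refine ⟨x₀ - ι m, by rw [map_sub, hπι, sub_zero], fun r hr => ?_⟩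
  rw [map_sub, hπι, sub_zero] at hr
  have hrI : r ∈ I := mem_colon_singleton.mpr hr
  have h1 : Y.mkQ (ι (r • m)) = r • Y.mkQ x₀ := by
    rw [← hm ⟨r, hrI⟩]
    exact LinearMap.congr_fun hf ⟨r, hrI⟩
  have h2 : Y.mkQ (r • (x₀ - ι m)) = r • Y.mkQ x₀ - Y.mkQ (ι (r • m)) := by
    simp [smul_sub]
  rw [← Quotient.mk_eq_zero Y, ← mkQ_apply, h2, h1, sub_self]

theorem ext1Zero_of_forall_baerAt
    (hE : ∀ (e : E) (I : Ideal R), Ideal.torsionOf R E e ≤ I → Module.BaerAt I M) :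
    Ext1Zero R E M := by
  intro X _ _ ι π hι hπ hexact
  obtain ⟨Y, hY, hYmax⟩ := exists_maximal_disjoint (ker π)
  refine exists_rightInverse_of_disjoint_ker hY (eq_top_iff'.mpr fun e => ?_)
  obtain ⟨x₀, rfl⟩ := hπ e
  obtain ⟨y, hyx, hy⟩ := exists_lift_smul_mem hE hι hexact hY x₀
  have hyY : y ∈ Y := hYmax (disjoint_sup_span_singleton_ker hY hy) le_sup_left
    (mem_sup_right (mem_span_singleton_self y))
  exact hyx ▸ mem_map_of_mem hyY

end Ext

section Domain

variable {R E : Type*} [CommRing R] [IsDomain R] [AddCommGroup E] [Module R E] {p : Ideal R}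
  {N : Submodule R E}

theorem torsionOf_ne_bot_of_essential (hp : p ≠ ⊥) (hN : p • N = ⊥)
    (hess : ∀ P : Submodule R E, P ⊓ N = ⊥ → P = ⊥) (e : E) : Ideal.torsionOf R E e ≠ ⊥ := by
  obtain rfl | he := eq_or_ne e 0
  · simp
  obtain ⟨z, hz, hz0⟩ := exists_mem_ne_zero_of_ne_bot fun h =>
    he (span_singleton_eq_bot.mp (hess _ h))
  obtain ⟨hze, hzN⟩ := mem_inf.mp hz
  obtain ⟨r, rfl⟩ := mem_span_singleton.mp hze
  obtain ⟨v, hv, hv0⟩ := exists_mem_ne_zero_of_ne_bot hp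
  have hvr : v * r ∈ Ideal.torsionOf R E e := by
    rw [Ideal.mem_torsionOf_iff, mul_smul, ← mem_bot R, ← hN]
    exact smul_mem_smul hv hzN
  refine fun hbot => mul_ne_zero hv0 (left_ne_zero_of_smul hz0) ?_
  rwa [hbot, Ideal.mem_bot] at hvr

end Domain

section Dedekind

variable {R : Type*} [CommRing R] [IsDedekindDomain R]

/-- Choose `J` with `I * J = (a)`, `a ≠ 0`; each `b ∈ J` gives `φ_b : I → R`, `x ↦ b x / a`, and
the elements `x * b = a * φ_b x` generate `(a)`. -/
theorem Ideal.eq_top_of_forall_linearMap_apply_mem {I T : Ideal R} (hI : I ≠ ⊥)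
    (hT : ∀ (φ : I →ₗ[R] R) (x : I), φ x ∈ T) : T = ⊤ := by
  obtain ⟨a, haI, ha⟩ := Submodule.exists_mem_ne_zero_of_ne_bot hI
  obtain ⟨J, hJ⟩ := Ideal.dvd_span_singleton.mpr haI
  suffices span {a} ≤ span {a} * T from
    top_le_iff.mp ((span_singleton_mul_right_mono ha).mp (by rwa [mul_top]))
  refine hJ.le.trans (Ideal.mul_le.mpr fun x hx b hb => ?_)
  have hba : ∀ x ∈ I, b * x ∈ R ∙ a := fun x hx => by
    change b * x ∈ Ideal.span {a}
    rw [hJ, mul_comm]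
    exact Ideal.mul_mem_mul hb hx
  let φ : I →ₗ[R] R := LinearEquiv.coord R R a ha ∘ₗ (LinearMap.mulLeft R b).restrict hba
  have hφ : φ ⟨x, hx⟩ * a = b * x :=
    LinearEquiv.toSpanNonzeroSingleton_symm_apply_smul R R a ha _
  rw [mul_comm x, ← hφ, mul_comm _ a]
  exact Ideal.mul_mem_mul (Ideal.mem_span_singleton_self a) (hT φ _)

theorem Module.baerAt_iff_smul_top_eq_top {M : Type*} [AddCommGroup M] [Module R M]
    {I : Ideal R} (hI : I ≠ ⊥) : Module.BaerAt I M ↔ I • (⊤ : Submodule R M) = ⊤ := by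
  constructor
  · intro h
    suffices (I • (⊤ : Submodule R M)).colon Set.univ = ⊤ by
      simpa [colon_eq_top_iff_subset] using this
    refine Ideal.eq_top_of_forall_linearMap_apply_mem hI fun φ y => ?_
    refine mem_colon.mpr fun n _ => ?_
    obtain ⟨m, hm⟩ := h (φ.smulRight n)
    rw [← smulRight_apply, hm]
    exact smul_mem_smul y.2 mem_top
  · intro hIM f
    let ρ : M →ₗ[R] I →ₗ[R] M := smulRightₗ I.subtype
    suffices (range ρ).colon {f} = ⊤ by
      obtain ⟨m, hm⟩ := mem_colon_singleton.mp (this.symm ▸ mem_top : (1 : R) ∈ _)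
      exact ⟨m, fun x => by rw [one_smul] at hm; rw [← hm]; rfl⟩
    refine Ideal.eq_top_of_forall_linearMap_apply_mem hI fun φ y => ?_
    obtain ⟨m, hm⟩ :=
      exists_linearMap_smul_eq_smul_of_mem_smul_top φ (hIM.symm ▸ mem_top : f y ∈ _)
    refine mem_colon_singleton.mpr ⟨m, LinearMap.ext fun x => ?_⟩
    have hyx : φ y • x = φ x • y := Subtype.ext <| by
      simp only [SetLike.val_smul, smul_eq_mul]
      rw [Ideal.linearMap_apply_mul_comm, mul_comm]
    rw [smulRightₗ_apply_apply, LinearMap.smul_apply, ← map_smul, hyx, map_smul, hm]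
    rfl

variable {E : Type*} [AddCommGroup E] [Module R E] {p : Ideal R} {N : Submodule R E}

theorem exists_pow_le_torsionOf_of_essential (hp : p.IsMaximal) (hp0 : p ≠ ⊥) (hN : p • N = ⊥)
    (hess : ∀ P : Submodule R E, P ⊓ N = ⊥ → P = ⊥) (e : E) :
    ∃ n, p ^ n ≤ Ideal.torsionOf R E e := by
  obtain ⟨n, J, hpJ, hJ⟩ := WfDvdMonoid.max_power_factor'
    (torsionOf_ne_bot_of_essential hp0 hN hess e) (hp.ne_top ∘ Ideal.isUnit_iff.mp)
  have hJe : J • p ^ n • (R ∙ e) = ⊥ := by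
    rw [← Submodule.mul_smul, mul_comm, ← hJ, ← Ideal.annihilator_span_singleton_eq_torsionOf,
      annihilator_smul]
  have hJp : J ⊔ p = ⊤ :=
    hp.out.2 _ (right_lt_sup.mpr fun hle => hpJ (Ideal.dvd_iff_le.mpr hle))
  have hbot := hess _ (disjoint_iff.mp (disjoint_of_smul_eq_bot hJp hJe hN))
  refine ⟨n, fun x hx => (Ideal.mem_torsionOf_iff _ _).mpr ?_⟩
  rw [← mem_bot R, ← hbot]
  exact smul_mem_smul hx (mem_span_singleton_self e)

end Dedekind

theorem ext1Zero_of_pow_le_torsionOf {R M E : Type u} [CommRing R] [IsDedekindDomain R]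
    [AddCommGroup M] [Module R M] [AddCommGroup E] [Module R E] {p : Ideal R} (hp : p ≠ ⊥)
    (hM : p • (⊤ : Submodule R M) = ⊤) (hE : ∀ e : E, ∃ n, p ^ n ≤ Ideal.torsionOf R E e) :
    Ext1Zero R E M := by
  refine ext1Zero_of_forall_baerAt fun e I hI => ?_
  obtain ⟨n, hn⟩ := hE e
  have hpI : p ^ n ≤ I := hn.trans hI
  refine (Module.baerAt_iff_smul_top_eq_top (ne_bot_of_le_ne_bot (pow_ne_zero n hp) hpI)).mpr ?_
  exact top_le_iff.mp ((p.pow_smul_top_eq_top hM n).symm.le.trans (smul_mono_left hpI))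

/-- Over a Dedekind domain `R` with nonzero maximal ideal `p`:
`Ext¹_R(R/p, M) = 0` iff `Mp = M`, and in that case `Ext¹_R(E(R/p), M) = 0` for
any injective hull `E(R/p)` of `R/p`. -/
theorem dedekind_ext_injective_hull (R : Type u) [CommRing R] [IsDedekindDomain R]
    (p : Ideal R) (hp : p.IsMaximal) (hp0 : p ≠ ⊥)
    (M : Type u) [AddCommGroup M] [Module R M] :
    (Ext1Zero R (R ⧸ p) M ↔ p • (⊤ : Submodule R M) = ⊤) ∧
    (Ext1Zero R (R ⧸ p) M →
      ∀ (E : Type u) [AddCommGroup E] [Module R E] (j : (R ⧸ p) →ₗ[R] E),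
        Module.Injective R E → Function.Injective j →
          (∀ N : Submodule R E, N ⊓ LinearMap.range j = ⊥ → N = ⊥) →
            Ext1Zero R E M) := by
  have hiff : Ext1Zero R (R ⧸ p) M ↔ p • (⊤ : Submodule R M) = ⊤ :=
    ⟨fun h => (Module.baerAt_iff_smul_top_eq_top hp0).mp (Module.baerAt_of_ext1Zero_quotient p h),
      fun hM => ext1Zero_of_pow_le_torsionOf hp0 hM fun e =>
        ⟨1, (pow_one p).symm ▸ p.le_torsionOf_quotient e⟩⟩
  refine ⟨hiff, fun hext E _ _ j _ _ hess => ?_⟩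
  exact ext1Zero_of_pow_le_torsionOf hp0 (hiff.mp hext)
    (exists_pow_le_torsionOf_of_essential hp hp0 (p.smul_range_eq_bot j) hess)
end
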